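/- arXiv:1311.4245 — 2 statements merged into one kernel-verified Lean document; each statement's English description precedes it below -/
import Mathlib

section
/- (Sym-Tafel formula, semi-discrete case) Let a > 0 and let κ_n(t) be a solution of the semi-discrete mKdV equation dκ_n/dt = (1/a)·(tan(κ_{n+1}/2) − tan(κ_{n−1}/2)) with κ_n(t) ∈ (0,π). For each λ ∈ ℝ set ν = 2·arctan(aλ/2), and let φ_n(t,λ) be an SU(2)-valued function, differentiable in t and λ, satisfying φ_{n+1} = φ_n·L_n with L_n = [[e^{−iν/2}cos(κ_{n+1}/2), −e^{−iν/2}sin(κ_{n+1}/2)],[e^{iν/2}sin(κ_{n+1}/2), e^{iν/2}cos(κ_{n+1}/2)]] and dφ_n/dt = φ_n·M_n with M_n = (1/(2a))·[[−i·sin ν, −e^{−iν}tan(κ_n/2) − tan(κ_{n+1}/2)],[e^{iν}tan(κ_n/2) + tan(κ_{n+1}/2), i·sin ν]]. Fix λ and set γ_n = f⁻¹(−(∂_λφ_n)·φ_n⁻¹). Then for each t, γ is a discrete space curve such that the distance between contiguous vertices is the constant ε = a/(1 + a²λ²/4), the angle between contiguous tangent vectors T_{n−1}, T_n equals κ_n,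 and the angle between contiguous binormal vectors B_{n−1}, B_n equals ν. -/
/-
Write the SU(2) matrix `φ_n` as `[[q, -conj u], [u, conj q]]`. Conjugation by `φ_n` acts on
`su(2) ≅ ℝ³` as a rotation `R_n`. Differentiating `φ_{n+1} = φ_n L_n` in `λ`, with
`∂_λ L_n = -ν'(λ) e1 L_n`, gives `γ_{n+1} - γ_n = ν'(λ) R_n e1` and `ν'(λ) = ε`. Hence
`T_n = R_n e1`. Moreover `R_n = R_{n-1} F_n` with `F_n` the rotation induced by `L_n`, so
`B_n = R_{n-1} (0, sin ν, cos ν)`, and all lengths and angles can be read off in the fixed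
reference frame `e1, (0, sin ν, cos ν)`, on which `F_n` acts explicitly.
-/

open Matrix

noncomputable section

/-- Euclidean inner product on ℝ³ (written as `Fin 3 → ℝ`). -/
def dot3 (x y : Fin 3 → ℝ) : ℝ := x 0 * y 0 + x 1 * y 1 + x 2 * y 2

/-- Cross product on ℝ³. -/
def cross3 (x y : Fin 3 → ℝ) : Fin 3 → ℝ :=
  ![x 1 * y 2 - x 2 * y 1, x 2 * y 0 - x 0 * y 2, x 0 * y 1 - x 1 * y 0]

/-- Euclidean norm on ℝ³. -/
def norm3 (x : Fin 3 → ℝ) : ℝ := Real.sqrt (dot3 x x)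

/-- Tangent vector T_n = (γ_{n+1} − γ_n)/|γ_{n+1} − γ_n| of a discrete space curve. -/
def dT (γ : ℤ → Fin 3 → ℝ) (n : ℤ) : Fin 3 → ℝ :=
  (norm3 (γ (n + 1) - γ n))⁻¹ • (γ (n + 1) - γ n)

/-- Binormal vector B_n = (T_{n−1} × T_n)/|T_{n−1} × T_n|. -/
def dB (γ : ℤ → Fin 3 → ℝ) (n : ℤ) : Fin 3 → ℝ :=
  (norm3 (cross3 (dT γ (n - 1)) (dT γ n)))⁻¹ • cross3 (dT γ (n - 1)) (dT γ n)

/-- Principal normal vector N_n = B_n × T_n. -/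
def dN (γ : ℤ → Fin 3 → ℝ) (n : ℤ) : Fin 3 → ℝ := cross3 (dB γ n) (dT γ n)

/-- The matrix L_n of the discrete Frenet–Serret formula, in SU(2) form. -/
def Ldisc (ν k : ℝ) : Matrix (Fin 2) (Fin 2) ℂ :=
  !![Complex.exp (-(Complex.I / 2) * (ν : ℂ)) * ((Real.cos (k / 2) : ℝ) : ℂ),
       -(Complex.exp (-(Complex.I / 2) * (ν : ℂ)) * ((Real.sin (k / 2) : ℝ) : ℂ));
     Complex.exp ((Complex.I / 2) * (ν : ℂ)) * ((Real.sin (k / 2) : ℝ) : ℂ),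
       Complex.exp ((Complex.I / 2) * (ν : ℂ)) * ((Real.cos (k / 2) : ℝ) : ℂ)]

/-- The matrix M_n of the semi-discrete mKdV AKNS pair, with kn = κ_n, kn1 = κ_{n+1}. -/
def Msd (a ν kn kn1 : ℝ) : Matrix (Fin 2) (Fin 2) ℂ :=
  (1 / (2 * (a : ℂ))) •
    !![-(Complex.I * ((Real.sin ν : ℝ) : ℂ)),
         -(Complex.exp (-(Complex.I) * (ν : ℂ)) * ((Real.tan (kn / 2) : ℝ) : ℂ))
           - ((Real.tan (kn1 / 2) : ℝ) : ℂ);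
       Complex.exp (Complex.I * (ν : ℂ)) * ((Real.tan (kn / 2) : ℝ) : ℂ)
           + ((Real.tan (kn1 / 2) : ℝ) : ℂ),
         Complex.I * ((Real.sin ν : ℝ) : ℂ)]

-- Rotation by `k` about the third axis, followed by rotation by `-ν` about the first.
open Real in
def frenetMat (ν k : ℝ) : Matrix (Fin 3) (Fin 3) ℝ :=
  !![cos k, -sin k, 0;
     cos ν * sin k, cos ν * cos k, sin ν;
     -(sin ν * sin k), -(sin ν * cos k), cos ν]

def e1v : Fin 3 → ℝ := ![1, 0, 0]

open Real in
def binormalVec (ν : ℝ) : Fin 3 → ℝ := ![0, sin ν, cos ν]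

section Vectors

lemma dot3_smul_left (c : ℝ) (x y : Fin 3 → ℝ) : dot3 (c • x) y = c * dot3 x y := by
  simp only [dot3, Pi.smul_apply, smul_eq_mul]; ring

lemma dot3_smul_right (c : ℝ) (x y : Fin 3 → ℝ) : dot3 x (c • y) = c * dot3 x y := by
  simp only [dot3, Pi.smul_apply, smul_eq_mul]; ring

lemma cross3_smul_smul (c d : ℝ) (x y : Fin 3 → ℝ) :
    cross3 (c • x) (d • y) = (c * d) • cross3 x y := by
  ext i; fin_cases i <;> simp [cross3] <;> ring

lemma cross3_smul_self (c d : ℝ) (x : Fin 3 → ℝ) : cross3 (c • x) (d • x) = 0 := by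
  ext i; fin_cases i <;> simp [cross3] <;> ring

lemma norm3_eq_of_dot3_self {x : Fin 3 → ℝ} {c : ℝ} (hc : 0 ≤ c) (h : dot3 x x = c ^ 2) :
    norm3 x = c := by
  rw [norm3, h, Real.sqrt_sq hc]

lemma not_collinear_of_cross3_ne_zero {x y z : Fin 3 → ℝ} (h : cross3 (y - x) (z - y) ≠ 0) :
    ¬ Collinear ℝ ({x, y, z} : Set (Fin 3 → ℝ)) := by
  intro hcol
  obtain ⟨v, hv⟩ := (collinear_iff_of_mem (Set.mem_insert _ _)).mp hcol
  obtain ⟨r, rfl⟩ := hv y (by simp)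
  obtain ⟨s, rfl⟩ := hv z (by simp)
  apply h
  simp only [vadd_eq_add, add_sub_cancel_right, add_sub_add_right_eq_sub, ← sub_smul]
  exact cross3_smul_self _ _ v

end Vectors

section FrenetMat

variable (ν k : ℝ)

lemma dot3_frenetMat_e1v : dot3 (frenetMat ν k *ᵥ e1v) e1v = Real.cos k := by
  simp [frenetMat, e1v, dot3, Matrix.mulVec, dotProduct, Fin.sum_univ_three]

lemma cross3_e1v_frenetMat_e1v :
    cross3 e1v (frenetMat ν k *ᵥ e1v) = Real.sin k • binormalVec ν := by
  ext i; fin_cases i <;>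
    simp [frenetMat, e1v, binormalVec, cross3, Matrix.mulVec, dotProduct, Fin.sum_univ_three] <;>
    ring

lemma dot3_binormalVec_self : dot3 (binormalVec ν) (binormalVec ν) = 1 := by
  simpa [binormalVec, dot3, sq] using Real.sin_sq_add_cos_sq ν

lemma dot3_frenetMat_binormalVec :
    dot3 (frenetMat ν k *ᵥ binormalVec ν) (binormalVec ν) = Real.cos ν := by
  simp [frenetMat, binormalVec, dot3, Matrix.mulVec, dotProduct, Fin.sum_univ_three]
  linear_combination Real.cos ν * Real.sin_sq_add_cos_sq ν

lemma dot3_frenetMat_binormalVec_cross3 :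
    dot3 (frenetMat ν k *ᵥ binormalVec ν) (cross3 (binormalVec ν) (frenetMat ν k *ᵥ e1v))
      = Real.sin ν := by
  simp [frenetMat, binormalVec, e1v, cross3, dot3, Matrix.mulVec, dotProduct, Fin.sum_univ_three]
  linear_combination Real.sin ν * (Real.sin ν ^ 2 + Real.cos ν ^ 2) * Real.sin_sq_add_cos_sq k
    + Real.sin ν * Real.sin_sq_add_cos_sq ν

end FrenetMat

structure IsDiscreteFrame (γ : ℤ → Fin 3 → ℝ) (R : ℤ → Matrix (Fin 3) (Fin 3) ℝ) (ε ν : ℝ)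
    (κ : ℤ → ℝ) : Prop where
  dot3_mulVec : ∀ n x y, dot3 (R n *ᵥ x) (R n *ᵥ y) = dot3 x y
  cross3_mulVec : ∀ n x y, cross3 (R n *ᵥ x) (R n *ᵥ y) = R n *ᵥ cross3 x y
  step : ∀ n, R n = R (n - 1) * frenetMat ν (κ n)
  sub_eq : ∀ n, γ (n + 1) - γ n = ε • (R n *ᵥ e1v)

namespace IsDiscreteFrame

variable {γ : ℤ → Fin 3 → ℝ} {R : ℤ → Matrix (Fin 3) (Fin 3) ℝ} {ε ν : ℝ} {κ : ℤ → ℝ}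

lemma norm3_sub (h : IsDiscreteFrame γ R ε ν κ) (hε : 0 < ε) (n : ℤ) :
    norm3 (γ (n + 1) - γ n) = ε := by
  refine norm3_eq_of_dot3_self hε.le ?_
  rw [h.sub_eq, dot3_smul_left, dot3_smul_right, h.dot3_mulVec]
  simp [dot3, e1v]; ring

lemma dT_eq (h : IsDiscreteFrame γ R ε ν κ) (hε : 0 < ε) (n : ℤ) : dT γ n = R n *ᵥ e1v := by
  rw [dT, h.norm3_sub hε, h.sub_eq, smul_smul, inv_mul_cancel₀ hε.ne', one_smul]

lemma cross3_dT (h : IsDiscreteFrame γ R ε ν κ) (hε : 0 < ε) (n : ℤ) :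
    cross3 (dT γ (n - 1)) (dT γ n) = Real.sin (κ n) • (R (n - 1) *ᵥ binormalVec ν) := by
  rw [h.dT_eq hε, h.dT_eq hε, h.step n, ← Matrix.mulVec_mulVec, h.cross3_mulVec,
    cross3_e1v_frenetMat_e1v, Matrix.mulVec_smul]

lemma dB_eq (h : IsDiscreteFrame γ R ε ν κ) (hε : 0 < ε) (hκ : ∀ n, 0 < Real.sin (κ n))
    (n : ℤ) : dB γ n = R (n - 1) *ᵥ binormalVec ν := by
  have hnorm : norm3 (cross3 (dT γ (n - 1)) (dT γ n)) = Real.sin (κ n) := by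
    refine norm3_eq_of_dot3_self (hκ n).le ?_
    rw [h.cross3_dT hε, dot3_smul_left, dot3_smul_right, h.dot3_mulVec, dot3_binormalVec_self]
    ring
  rw [dB, hnorm, h.cross3_dT hε, smul_smul, inv_mul_cancel₀ (hκ n).ne', one_smul]

lemma not_collinear (h : IsDiscreteFrame γ R ε ν κ) (hε : 0 < ε)
    (hκ : ∀ n, 0 < Real.sin (κ n)) (n : ℤ) :
    ¬ Collinear ℝ ({γ (n - 1), γ n, γ (n + 1)} : Set (Fin 3 → ℝ)) := by
  apply not_collinear_of_cross3_ne_zero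
  have hprev : γ n - γ (n - 1) = ε • dT γ (n - 1) := by
    simpa [h.dT_eq hε] using h.sub_eq (n - 1)
  have hnext : γ (n + 1) - γ n = ε • dT γ n := by rw [h.dT_eq hε, h.sub_eq]
  have hB : R (n - 1) *ᵥ binormalVec ν ≠ 0 := fun h0 => by
    simpa [h0, dot3] using (h.dot3_mulVec (n - 1) (binormalVec ν) (binormalVec ν)).trans
      (dot3_binormalVec_self ν)
  rw [hprev, hnext, cross3_smul_smul, h.cross3_dT hε, smul_smul]
  exact smul_ne_zero (mul_ne_zero (mul_self_ne_zero.2 hε.ne') (hκ n).ne') hB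

lemma dot3_dT (h : IsDiscreteFrame γ R ε ν κ) (hε : 0 < ε) (n : ℤ) :
    dot3 (dT γ n) (dT γ (n - 1)) = Real.cos (κ n) := by
  rw [h.dT_eq hε, h.dT_eq hε, h.step n, ← Matrix.mulVec_mulVec, h.dot3_mulVec,
    dot3_frenetMat_e1v]

lemma dot3_dB (h : IsDiscreteFrame γ R ε ν κ) (hε : 0 < ε) (hκ : ∀ n, 0 < Real.sin (κ n))
    (n : ℤ) : dot3 (dB γ n) (dB γ (n - 1)) = Real.cos ν := by
  rw [h.dB_eq hε hκ, h.dB_eq hε hκ, h.step (n - 1), ← Matrix.mulVec_mulVec, h.dot3_mulVec,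
    dot3_frenetMat_binormalVec]

lemma dot3_dB_dN (h : IsDiscreteFrame γ R ε ν κ) (hε : 0 < ε) (hκ : ∀ n, 0 < Real.sin (κ n))
    (n : ℤ) : dot3 (dB γ n) (dN γ (n - 1)) = Real.sin ν := by
  rw [dN, h.dB_eq hε hκ, h.dB_eq hε hκ, h.dT_eq hε, h.step (n - 1), ← Matrix.mulVec_mulVec,
    ← Matrix.mulVec_mulVec, h.cross3_mulVec, h.dot3_mulVec, dot3_frenetMat_binormalVec_cross3]

end IsDiscreteFrame

-- The rotation `x ↦ f⁻¹ (U f(x) Uᴴ)` of `ℝ³ ≅ su(2)`, for `U = [[q, -conj u], [u, conj q]]`.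
open Complex ComplexConjugate in
def su2Rot (U : Matrix (Fin 2) (Fin 2) ℂ) : Matrix (Fin 3) (Fin 3) ℝ :=
  !![normSq (U 0 0) - normSq (U 1 0), -2 * (U 0 0 * U 1 0).re, 2 * (U 0 0 * U 1 0).im;
     2 * (U 1 0 * conj (U 0 0)).re, (U 0 0 ^ 2).re - (U 1 0 ^ 2).re, (U 1 0 ^ 2).im - (U 0 0 ^ 2).im;
     -2 * (U 1 0 * conj (U 0 0)).im, (U 0 0 ^ 2).im + (U 1 0 ^ 2).im, (U 0 0 ^ 2).re + (U 1 0 ^ 2).re]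

-- `f⁻¹` on `su(2)`.
def su2Coords (S : Matrix (Fin 2) (Fin 2) ℂ) : Fin 3 → ℝ :=
  ![2 * (S 0 0).im, 2 * (S 1 0).im, 2 * (S 1 0).re]

def suE1 : Matrix (Fin 2) (Fin 2) ℂ := !![Complex.I / 2, 0; 0, -(Complex.I / 2)]

section SU2

open Complex ComplexConjugate

lemma dot3_su2Rot_mulVec (U : Matrix (Fin 2) (Fin 2) ℂ) (x y : Fin 3 → ℝ) :
    dot3 (su2Rot U *ᵥ x) (su2Rot U *ᵥ y) = (normSq (U 0 0) + normSq (U 1 0)) ^ 2 * dot3 x y := by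
  unfold su2Rot
  obtain ⟨a, b⟩ := U 0 0; obtain ⟨c, d⟩ := U 1 0
  simp [dot3, Matrix.mulVec, dotProduct, Fin.sum_univ_three, normSq_apply, mul_re, mul_im,
    pow_two]
  ring

lemma cross3_su2Rot_mulVec (U : Matrix (Fin 2) (Fin 2) ℂ) (x y : Fin 3 → ℝ) :
    cross3 (su2Rot U *ᵥ x) (su2Rot U *ᵥ y)
      = (normSq (U 0 0) + normSq (U 1 0)) • (su2Rot U *ᵥ cross3 x y) := by
  unfold su2Rot
  obtain ⟨a, b⟩ := U 0 0; obtain ⟨c, d⟩ := U 1 0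
  ext i; fin_cases i <;>
    simp [cross3, Matrix.mulVec, dotProduct, Fin.sum_univ_three, normSq_apply, mul_re,
      mul_im, pow_two] <;>
    ring

lemma su2Rot_mul {U : Matrix (Fin 2) (Fin 2) ℂ} (hU₁₁ : U 1 1 = conj (U 0 0))
    (hU₀₁ : U 0 1 = -conj (U 1 0)) (V : Matrix (Fin 2) (Fin 2) ℂ) :
    su2Rot (U * V) = su2Rot U * su2Rot V := by
  have h₀ : (U * V) 0 0 = U 0 0 * V 0 0 - conj (U 1 0) * V 1 0 := by
    simp only [Matrix.mul_apply, Fin.sum_univ_two, hU₀₁, neg_mul]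
    ring
  have h₁ : (U * V) 1 0 = U 1 0 * V 0 0 + conj (U 0 0) * V 1 0 := by
    simp [Matrix.mul_apply, hU₁₁]
  unfold su2Rot
  rw [h₀, h₁]
  obtain ⟨a, b⟩ := U 0 0; obtain ⟨c, d⟩ := U 1 0; obtain ⟨e, f⟩ := V 0 0; obtain ⟨g, h⟩ := V 1 0
  ext i j; fin_cases i <;> fin_cases j <;>
    simp [Matrix.mul_apply, Fin.sum_univ_three, normSq_apply, mul_re, mul_im, pow_two] <;>
    ring

lemma star_eq_adjugate_of_mem_specialUnitaryGroup {n : Type*} [Fintype n] [DecidableEq n]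
    {α : Type*} [CommRing α] [StarRing α] {U : Matrix n n α}
    (hU : U ∈ Matrix.specialUnitaryGroup n α) : star U = U.adjugate := by
  obtain ⟨hunit, hdet⟩ := Matrix.mem_specialUnitaryGroup_iff.1 hU
  rw [← Matrix.inv_eq_left_inv (Matrix.mem_unitaryGroup_iff'.1 hunit), Matrix.inv_def, hdet,
    Ring.inverse_one, one_smul]

lemma apply_one_one_of_mem_specialUnitaryGroup {U : Matrix (Fin 2) (Fin 2) ℂ}
    (hU : U ∈ Matrix.specialUnitaryGroup (Fin 2) ℂ) : U 1 1 = conj (U 0 0) := by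
  simpa [Matrix.adjugate_fin_two] using
    (congrFun₂ (star_eq_adjugate_of_mem_specialUnitaryGroup hU) 0 0).symm

lemma apply_zero_one_of_mem_specialUnitaryGroup {U : Matrix (Fin 2) (Fin 2) ℂ}
    (hU : U ∈ Matrix.specialUnitaryGroup (Fin 2) ℂ) : U 0 1 = -conj (U 1 0) := by
  have h := congrFun₂ (star_eq_adjugate_of_mem_specialUnitaryGroup hU) 1 0
  simp only [star_apply, RCLike.star_def, adjugate_fin_two, of_apply, cons_val', cons_val_zero,
    cons_val_fin_one, cons_val_one] at h
  rw [← Complex.conj_conj (U 0 1), h, map_neg]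

lemma normSq_add_normSq_of_mem_specialUnitaryGroup {U : Matrix (Fin 2) (Fin 2) ℂ}
    (hU : U ∈ Matrix.specialUnitaryGroup (Fin 2) ℂ) : normSq (U 0 0) + normSq (U 1 0) = 1 := by
  have h := congrFun₂ (Matrix.mem_unitaryGroup_iff'.1 hU.1) 0 0
  simp only [Matrix.mul_apply, star_apply, RCLike.star_def, Fin.sum_univ_two, one_apply_eq] at h
  exact_mod_cast (by simpa [← Complex.mul_conj, mul_comm] using h :
    ((normSq (U 0 0) + normSq (U 1 0) : ℝ) : ℂ) = 1)

end SU2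

section Ldisc

open Complex ComplexConjugate

lemma exp_neg_I_div_two_mul (ν : ℝ) :
    exp (-(I / 2) * ν) = ⟨Real.cos (ν / 2), -Real.sin (ν / 2)⟩ := by
  rw [show -(I / 2) * ν = ((-(ν / 2) : ℝ) : ℂ) * I by push_cast; ring]
  apply Complex.ext
  · rw [exp_ofReal_mul_I_re, Real.cos_neg]
  · rw [exp_ofReal_mul_I_im, Real.sin_neg]

lemma exp_I_div_two_mul (ν : ℝ) :
    exp (I / 2 * ν) = ⟨Real.cos (ν / 2), Real.sin (ν / 2)⟩ := by
  rw [show I / 2 * ν = ((ν / 2 : ℝ) : ℂ) * I by push_cast; ring]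
  exact Complex.ext (exp_ofReal_mul_I_re _) (exp_ofReal_mul_I_im _)

lemma cos_eq_cos_half_sq_sub_sin_half_sq (x : ℝ) :
    Real.cos x = Real.cos (x / 2) ^ 2 - Real.sin (x / 2) ^ 2 := by
  rw [← Real.cos_two_mul', mul_div_cancel₀ x two_ne_zero]

lemma sin_eq_two_mul_sin_half_mul_cos_half (x : ℝ) :
    Real.sin x = 2 * Real.sin (x / 2) * Real.cos (x / 2) := by
  rw [← Real.sin_two_mul, mul_div_cancel₀ x two_ne_zero]

lemma su2Rot_Ldisc (ν k : ℝ) : su2Rot (Ldisc ν k) = frenetMat ν k := by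
  have hν := Real.sin_sq_add_cos_sq (ν / 2)
  have hk := Real.sin_sq_add_cos_sq (k / 2)
  simp only [su2Rot, frenetMat, Ldisc, exp_neg_I_div_two_mul, exp_I_div_two_mul,
    cos_eq_cos_half_sq_sub_sin_half_sq ν, sin_eq_two_mul_sin_half_mul_cos_half ν,
    cos_eq_cos_half_sq_sub_sin_half_sq k, sin_eq_two_mul_sin_half_mul_cos_half k]
  generalize Real.cos (ν / 2) = C at *; generalize Real.sin (ν / 2) = S at *
  generalize Real.cos (k / 2) = c at *; generalize Real.sin (k / 2) = s at *
  -- each entry is a double-angle identity, up to a multiple of `sin² + cos² = 1`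
  ext i j; fin_cases i <;> fin_cases j <;>
    simp [normSq_apply, mul_re, mul_im, pow_two] <;>
    first
    | ring1
    | linear_combination (c ^ 2 - s ^ 2) * hν
    | linear_combination 2 * c * s * hν
    | linear_combination 2 * C * S * hk
    | linear_combination (C ^ 2 - S ^ 2) * hk

lemma det_Ldisc (ν k : ℝ) : (Ldisc ν k).det = 1 := by
  have he : exp (-(I / 2) * ν) * exp (I / 2 * ν) = 1 := by rw [← exp_add]; simp
  have hk : ((Real.cos (k / 2) : ℝ) : ℂ) ^ 2 + ((Real.sin (k / 2) : ℝ) : ℂ) ^ 2 = 1 := by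
    exact_mod_cast Real.cos_sq_add_sin_sq (k / 2)
  rw [Ldisc, Matrix.det_fin_two_of]
  linear_combination (((Real.cos (k / 2) : ℝ) : ℂ) ^ 2 + ((Real.sin (k / 2) : ℝ) : ℂ) ^ 2) * he + hk

lemma hasDerivAt_Ldisc_apply {ν : ℝ → ℝ} {ν' x : ℝ} (hν : HasDerivAt ν ν' x) (k : ℝ)
    (i j : Fin 2) :
    HasDerivAt (fun y => Ldisc (ν y) k i j) (-((ν' : ℂ) • (suE1 * Ldisc (ν x) k)) i j) x := by
  have hν' := hν.ofReal_comp
  fin_cases i <;> fin_cases j <;>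
    simp [Ldisc, suE1]
  · exact ((hν'.const_mul _).fun_neg.cexp.mul_const _).congr_deriv (by ring)
  · exact ((hν'.const_mul _).fun_neg.cexp.mul_const _).neg.congr_deriv (by ring)
  · exact ((hν'.const_mul _).cexp.mul_const _).congr_deriv (by ring)
  · exact ((hν'.const_mul _).cexp.mul_const _).congr_deriv (by ring)

end Ldisc

lemma hasDerivAt_matrix_mul_apply {𝕜 𝔸 : Type*} [NontriviallyNormedField 𝕜] [NormedCommRing 𝔸]
    [NormedAlgebra 𝕜 𝔸] {l m n : Type*} [Fintype m] {A : 𝕜 → Matrix l m 𝔸}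
    {B : 𝕜 → Matrix m n 𝔸} {A' : Matrix l m 𝔸} {B' : Matrix m n 𝔸} {x : 𝕜}
    (hA : ∀ i j, HasDerivAt (fun y => A y i j) (A' i j) x)
    (hB : ∀ i j, HasDerivAt (fun y => B y i j) (B' i j) x) (i : l) (j : n) :
    HasDerivAt (fun y => (A y * B y) i j) ((A' * B x + A x * B') i j) x := by
  simp only [Matrix.mul_apply, Matrix.add_apply, ← Finset.sum_add_distrib]
  exact HasDerivAt.fun_sum fun k _ => (hA i k).mul (hB k j)

lemma hasDerivAt_two_mul_arctan (a l : ℝ) :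
    HasDerivAt (fun l => 2 * Real.arctan (a * l / 2)) (a / (1 + a ^ 2 * l ^ 2 / 4)) l := by
  refine ((((hasDerivAt_id' l).const_mul a).div_const 2).arctan.const_mul 2).congr_deriv ?_
  field_simp
  ring

section SymTafel

open Complex ComplexConjugate

lemma su2Coords_sub (S T : Matrix (Fin 2) (Fin 2) ℂ) :
    su2Coords (S - T) = su2Coords S - su2Coords T := by
  ext i; fin_cases i <;> simp [su2Coords] <;> ring

lemma su2Coords_ofReal_smul (c : ℝ) (S : Matrix (Fin 2) (Fin 2) ℂ) :
    su2Coords ((c : ℂ) • S) = c • su2Coords S := by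
  ext i; fin_cases i <;> simp [su2Coords] <;> ring

lemma su2Coords_mul_suE1_mul_conjTranspose {U : Matrix (Fin 2) (Fin 2) ℂ}
    (hU₁₁ : U 1 1 = conj (U 0 0)) (hU₀₁ : U 0 1 = -conj (U 1 0)) :
    su2Coords (U * suE1 * Uᴴ) = su2Rot U *ᵥ e1v := by
  simp only [su2Coords, su2Rot, suE1, e1v]
  ext i; fin_cases i <;>
    simp [Matrix.mul_apply, Matrix.mulVec, dotProduct, Fin.sum_univ_three, hU₁₁, hU₀₁,
      normSq_apply] <;>
    ring

lemma eq_sub_smul_of_mul_Ldisc {Φ Ψ : ℝ → Matrix (Fin 2) (Fin 2) ℂ}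
    {Φ' Ψ' : Matrix (Fin 2) (Fin 2) ℂ} {ν : ℝ → ℝ} {ν' k x : ℝ}
    (hrec : ∀ y, Ψ y = Φ y * Ldisc (ν y) k)
    (hΦ : ∀ i j, HasDerivAt (fun y => Φ y i j) (Φ' i j) x)
    (hΨ : ∀ i j, HasDerivAt (fun y => Ψ y i j) (Ψ' i j) x) (hν : HasDerivAt ν ν' x) :
    Ψ' = Φ' * Ldisc (ν x) k - (ν' : ℂ) • (Φ x * suE1 * Ldisc (ν x) k) := by
  ext i j
  have h := hasDerivAt_matrix_mul_apply (B' := -((ν' : ℂ) • (suE1 * Ldisc (ν x) k))) hΦ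
    (hasDerivAt_Ldisc_apply hν k) i j
  simp only [← hrec] at h
  rw [(hΨ i j).unique h, Matrix.mul_neg, Matrix.mul_smul, ← Matrix.mul_assoc, ← sub_eq_add_neg]

lemma neg_mul_inv_sub_neg_mul_inv {n α : Type*} [Fintype n] [DecidableEq n] [CommRing α]
    {Φ Φ' L E : Matrix n n α} (hL : IsUnit L.det) (c : α) :
    -((Φ' * L - c • (Φ * E * L)) * (Φ * L)⁻¹) - -(Φ' * Φ⁻¹) = c • (Φ * E * Φ⁻¹) := by
  have hLL : L * L⁻¹ = 1 := Matrix.mul_nonsing_inv L hL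
  rw [Matrix.mul_inv_rev, sub_mul, Matrix.smul_mul]
  simp only [Matrix.mul_assoc, ← Matrix.mul_assoc L, hLL, Matrix.one_mul]
  abel

end SymTafel

theorem isDiscreteFrame_of_mem_specialUnitaryGroup {Φ Φl : ℝ → ℤ → Matrix (Fin 2) (Fin 2) ℂ}
    {κ : ℤ → ℝ} {ν : ℝ → ℝ} {ε lam : ℝ} {γ : ℤ → Fin 3 → ℝ}
    (hSU : ∀ l n, Φ l n ∈ Matrix.specialUnitaryGroup (Fin 2) ℂ)
    (hrec : ∀ l n, Φ l (n + 1) = Φ l n * Ldisc (ν l) (κ (n + 1)))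
    (hl : ∀ l n i j, HasDerivAt (fun u => Φ u n i j) (Φl l n i j) l)
    (hν : HasDerivAt ν ε lam) (hγ : ∀ n, γ n = su2Coords (-(Φl lam n * (Φ lam n)⁻¹))) :
    IsDiscreteFrame γ (fun n => su2Rot (Φ lam n)) ε (ν lam) κ where
  dot3_mulVec n x y := by
    rw [dot3_su2Rot_mulVec, normSq_add_normSq_of_mem_specialUnitaryGroup (hSU lam n), one_pow,
      one_mul]
  cross3_mulVec n x y := by
    rw [cross3_su2Rot_mulVec, normSq_add_normSq_of_mem_specialUnitaryGroup (hSU lam n), one_smul]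
  step n := by
    have h := hrec lam (n - 1)
    rw [sub_add_cancel] at h
    rw [h, su2Rot_mul (apply_one_one_of_mem_specialUnitaryGroup (hSU lam _))
      (apply_zero_one_of_mem_specialUnitaryGroup (hSU lam _)), su2Rot_Ldisc]
  sub_eq n := by
    have hΦl := eq_sub_smul_of_mul_Ldisc (fun l => hrec l n) (hl lam n) (hl lam (n + 1)) hν
    have hΦinv : (Φ lam n)⁻¹ = (Φ lam n)ᴴ :=
      Matrix.inv_eq_left_inv (Matrix.mem_unitaryGroup_iff'.1 (hSU lam n).1)
    rw [hγ, hγ, ← su2Coords_sub, hrec, hΦl,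
      neg_mul_inv_sub_neg_mul_inv (by rw [det_Ldisc]; exact isUnit_one), hΦinv,
      su2Coords_ofReal_smul, su2Coords_mul_suE1_mul_conjTranspose
        (apply_one_one_of_mem_specialUnitaryGroup (hSU lam n))
        (apply_zero_one_of_mem_specialUnitaryGroup (hSU lam n))]

theorem statement11_general (a lam : ℝ) (ha : 0 < a) (κ : ℝ → ℤ → ℝ)
    (hκ : ∀ t n, κ t n ∈ Set.Ioo 0 Real.pi)
    (φ φl : ℝ → ℝ → ℤ → Matrix (Fin 2) (Fin 2) ℂ)
    (hsu : ∀ t l n, (φ t l n)ᴴ * φ t l n = 1 ∧ (φ t l n).det = 1)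
    (hrec : ∀ t l n, φ t l (n + 1) =
      φ t l n * Ldisc (2 * Real.arctan (a * l / 2)) (κ t (n + 1)))
    (hl : ∀ t l n, ∀ i j, HasDerivAt (fun u => φ t u n i j) (φl t l n i j) l)
    (S : ℝ → ℤ → Matrix (Fin 2) (Fin 2) ℂ)
    (hS : ∀ t n, S t n = -(φl t lam n * (φ t lam n)⁻¹))
    (γ : ℝ → ℤ → Fin 3 → ℝ)
    (hγ : ∀ t n, γ t n = ![2 * (S t n 0 0).im, 2 * (S t n 1 0).im, 2 * (S t n 1 0).re]) :
    (∀ t n, ¬ Collinear ℝ ({γ t (n - 1), γ t n, γ t (n + 1)} : Set (Fin 3 → ℝ))) ∧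
    (∀ t n, norm3 (γ t (n + 1) - γ t n) = a / (1 + a ^ 2 * lam ^ 2 / 4)) ∧
    (∀ t n, dot3 (dT (γ t) n) (dT (γ t) (n - 1)) = Real.cos (κ t n)) ∧
    (∀ t n, dot3 (dB (γ t) n) (dB (γ t) (n - 1)) = Real.cos (2 * Real.arctan (a * lam / 2)) ∧
            dot3 (dB (γ t) n) (dN (γ t) (n - 1)) = Real.sin (2 * Real.arctan (a * lam / 2))) := by
  have hε : 0 < a / (1 + a ^ 2 * lam ^ 2 / 4) := by positivity
  have hsin t n : 0 < Real.sin (κ t n) := Real.sin_pos_of_pos_of_lt_pi (hκ t n).1 (hκ t n).2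
  have hframe t : IsDiscreteFrame (γ t) (fun n => su2Rot (φ t lam n))
      (a / (1 + a ^ 2 * lam ^ 2 / 4)) (2 * Real.arctan (a * lam / 2)) (κ t) :=
    isDiscreteFrame_of_mem_specialUnitaryGroup (ν := fun l => 2 * Real.arctan (a * l / 2))
      (fun l n => ⟨Matrix.mem_unitaryGroup_iff'.2 (hsu t l n).1, (hsu t l n).2⟩) (hrec t) (hl t)
      (hasDerivAt_two_mul_arctan a lam) (fun n => by rw [hγ, hS]; rfl)
  exact ⟨fun t => (hframe t).not_collinear hε (hsin t), fun t => (hframe t).norm3_sub hε,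
    fun t => (hframe t).dot3_dT hε,
    fun t n => ⟨(hframe t).dot3_dB hε (hsin t) n, (hframe t).dot3_dB_dN hε (hsin t) n⟩⟩

/-- (Sym–Tafel formula, semi-discrete case.)  For a > 0, a solution κ_n(t) of the
semi-discrete mKdV equation, and an SU(2)-valued solution φ_n(t,λ) of the linear
problem, the curve γ_n = f⁻¹(−(∂_λφ_n)φ_n⁻¹) (at fixed λ) is, for each t, a discrete
space curve with constant segment length ε = a/(1+a²λ²/4), tangent angles κ_n and
binormal angles ν = 2 arctan(aλ/2). -/
theorem statement11 (a lam : ℝ) (ha : 0 < a) (κ : ℝ → ℤ → ℝ)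
    (hκ : ∀ t n, κ t n ∈ Set.Ioo 0 Real.pi)
    (hmkdv : ∀ t n, HasDerivAt (fun s => κ s n)
      ((1 / a) * (Real.tan (κ t (n + 1) / 2) - Real.tan (κ t (n - 1) / 2))) t)
    (φ φl : ℝ → ℝ → ℤ → Matrix (Fin 2) (Fin 2) ℂ)
    (hsu : ∀ t l n, (φ t l n)ᴴ * φ t l n = 1 ∧ (φ t l n).det = 1)
    (hrec : ∀ t l n, φ t l (n + 1) =
      φ t l n * Ldisc (2 * Real.arctan (a * l / 2)) (κ t (n + 1)))
    (ht : ∀ t l n, ∀ i j, HasDerivAt (fun s => φ s l n i j)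
      ((φ t l n * Msd a (2 * Real.arctan (a * l / 2)) (κ t n) (κ t (n + 1))) i j) t)
    (hl : ∀ t l n, ∀ i j, HasDerivAt (fun u => φ t u n i j) (φl t l n i j) l)
    (S : ℝ → ℤ → Matrix (Fin 2) (Fin 2) ℂ)
    (hS : ∀ t n, S t n = -(φl t lam n * (φ t lam n)⁻¹))
    (γ : ℝ → ℤ → Fin 3 → ℝ)
    (hγ : ∀ t n, γ t n = ![2 * (S t n 0 0).im, 2 * (S t n 1 0).im, 2 * (S t n 1 0).re]) :
    (∀ t n, ¬ Collinear ℝ ({γ t (n - 1), γ t n, γ t (n + 1)} : Set (Fin 3 → ℝ))) ∧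
    (∀ t n, norm3 (γ t (n + 1) - γ t n) = a / (1 + a ^ 2 * lam ^ 2 / 4)) ∧
    (∀ t n, dot3 (dT (γ t) n) (dT (γ t) (n - 1)) = Real.cos (κ t n)) ∧
    (∀ t n, dot3 (dB (γ t) n) (dB (γ t) (n - 1)) = Real.cos (2 * Real.arctan (a * lam / 2)) ∧
            dot3 (dB (γ t) n) (dN (γ t) (n - 1)) = Real.sin (2 * Real.arctan (a * lam / 2))) :=
  statement11_general a lam ha κ hκ φ φl hsu hrec hl S hS γ hγ

end
end

section
/- (Discrete curves on the sphere and constant-torsion discrete space curves) Let λ ≠ 0 and let Γ : ℤ → ℝ³ be a discrete curve with |Γ_n| = 1/|λ| for all n, such that consecutive points Γ_{n−1}, Γ_n are linearly independent and ⟨Γ_{n−1} × Γ_n, Γ_{n+1}⟩ is nonzero with the same sign for all n. Define γ : ℤ → ℝ³ by γ_{n+1} − γ_n = λ·(Γ_{n+1} × Γ_n). Then γ is a discrete space curve, with |γ_{n+1} − γ_n| = sin ξ_{n+1}/|λ| where ξ_{n+1} ∈ (0,π) is the angle between Γ_n and Γ_{n+1}, and the torsion of γ satisfies sin ν_{n+1}/ε_n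 = λ for all n, i.e. γ has constant torsion λ. -/
/-!
The edge `γ_{n+1} - γ_n = λ Γ_{n+1} × Γ_n` is orthogonal to `Γ_n` and `Γ_{n+1}`, so
`T_{n-1} × T_n` is a positive multiple of `⟨Γ_{n-1} × Γ_n, Γ_{n+1}⟩ Γ_n ≠ 0`. Hence
consecutive edges are not parallel, and, the triple product having constant sign, the binormal
is `B_n = ± |λ| Γ_n` with the same sign for all `n`. Then
`⟨B_{n+1}, N_n⟩ = λ² ⟨Γ_{n+1}, Γ_n × T_n⟩ = λ² ⟨T_n, Γ_{n+1} × Γ_n⟩ = λ ε_n`,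
while Lagrange's identity gives `ε_n = |λ| |Γ_{n+1} × Γ_n| = sin ξ_{n+1} / |λ|`.
-/

open Matrix

noncomputable section

open Real Set

lemma cross3_eq_crossProduct (x y : Fin 3 → ℝ) : cross3 x y = x ⨯₃ y := rfl

lemma dot3_eq_dotProduct (x y : Fin 3 → ℝ) : dot3 x y = x ⬝ᵥ y := (vec3_dotProduct x y).symm

lemma dotProduct_self_nonneg {ι R : Type*} [Fintype ι] [CommRing R] [LinearOrder R]
    [IsStrictOrderedRing R] (v : ι → R) : 0 ≤ v ⬝ᵥ v :=
  Finset.sum_nonneg fun i _ => mul_self_nonneg (v i)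

lemma crossProduct_dot_self {R : Type*} [CommRing R] (u v : Fin 3 → R) :
    u ⨯₃ v ⬝ᵥ u ⨯₃ v = u ⬝ᵥ u * v ⬝ᵥ v - (u ⬝ᵥ v) ^ 2 := by
  rw [cross_dot_cross, dotProduct_comm v u]; ring

lemma cross_cross_cross_eq_smul {R : Type*} [CommRing R] (u v w : Fin 3 → R) :
    v ⨯₃ u ⨯₃ (w ⨯₃ v) = (u ⨯₃ v ⬝ᵥ w) • v := by
  simp_rw [cross_apply, vec3_dotProduct]
  ext i; fin_cases i <;> simp <;> ring

lemma cross_sub_eq_zero_of_collinear {K : Type*} [Field K] {p q r : Fin 3 → K}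
    (h : Collinear K ({p, q, r} : Set (Fin 3 → K))) : (q - p) ⨯₃ (r - q) = 0 := by
  obtain ⟨v, hv⟩ := (collinear_iff_of_mem (by simp : q ∈ ({p, q, r} : Set (Fin 3 → K)))).mp h
  obtain ⟨a, rfl⟩ := hv p (by simp)
  obtain ⟨b, rfl⟩ := hv r (by simp)
  simp [vadd_eq_add]

lemma sq_norm3 (x : Fin 3 → ℝ) : norm3 x ^ 2 = x ⬝ᵥ x := by
  rw [norm3, dot3_eq_dotProduct, sq_sqrt (dotProduct_self_nonneg x)]

lemma norm3_pos {x : Fin 3 → ℝ} (hx : x ≠ 0) : 0 < norm3 x := by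
  rw [norm3, dot3_eq_dotProduct, sqrt_pos]
  exact (dotProduct_self_nonneg x).lt_of_ne (Ne.symm (dotProduct_self_eq_zero.not.mpr hx))

lemma norm3_smul (t : ℝ) (x : Fin 3 → ℝ) : norm3 (t • x) = |t| * norm3 x := by
  simp only [norm3, dot3_eq_dotProduct, smul_dotProduct, dotProduct_smul, smul_eq_mul,
    ← mul_assoc, sqrt_mul (mul_self_nonneg t), sqrt_mul_self_eq_abs]

lemma inv_norm3_smul_smul (t : ℝ) (x : Fin 3 → ℝ) :
    (norm3 (t • x))⁻¹ • (t • x) = (t / |t| / norm3 x) • x := by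
  rw [norm3_smul, smul_smul]
  congr 1
  field_simp

lemma norm3_cross_eq_mul_sin_arccos (u v : Fin 3 → ℝ) :
    norm3 (u ⨯₃ v) = norm3 u * norm3 v * sin (arccos (u ⬝ᵥ v / (norm3 u * norm3 v))) := by
  have ha : (norm3 u * norm3 v) ^ 2 = u ⬝ᵥ u * v ⬝ᵥ v := by rw [mul_pow, sq_norm3, sq_norm3]
  have ha₀ : 0 ≤ norm3 u * norm3 v := mul_nonneg (sqrt_nonneg _) (sqrt_nonneg _)
  rw [sin_arccos, norm3, dot3_eq_dotProduct, crossProduct_dot_self, ← ha]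
  set a := norm3 u * norm3 v
  rcases ha₀.eq_or_lt with ha0 | ha0
  · rw [← ha0, zero_mul, zero_pow two_ne_zero, zero_sub, sqrt_eq_zero_of_nonpos]
    exact neg_nonpos.mpr (sq_nonneg _)
  · rw [← sqrt_sq ha0.le, ← sqrt_mul (sq_nonneg a), sqrt_sq ha0.le]
    congr 1
    field_simp

lemma arccos_mem_Ioo_of_sin_pos {x : ℝ} (h : 0 < sin (arccos x)) : arccos x ∈ Ioo 0 π := by
  refine ⟨(arccos_nonneg x).lt_of_ne fun h0 => ?_, (arccos_le_pi x).lt_of_ne fun hπ => ?_⟩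
  · rw [← h0, sin_zero] at h; exact h.false
  · rw [hπ, sin_pi] at h; exact h.false

lemma div_abs_mul_div_abs_of_mul_pos {a b : ℝ} (h : 0 < a * b) : a / |a| * (b / |b|) = 1 := by
  rw [div_mul_div_comm, ← abs_mul, abs_of_pos h, div_self h.ne']

lemma mul_div_abs_mul_of_pos {k s : ℝ} (hk : 0 < k) : k * s / |k * s| = s / |s| := by
  rw [abs_mul, abs_of_pos hk, mul_div_mul_left _ _ hk.ne']

def tripleProduct (Γ : ℤ → Fin 3 → ℝ) (n : ℤ) : ℝ := Γ (n - 1) ⨯₃ Γ n ⬝ᵥ Γ (n + 1)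

lemma dot3_cross3_eq_tripleProduct (Γ : ℤ → Fin 3 → ℝ) (n : ℤ) :
    dot3 (cross3 (Γ (n - 1)) (Γ n)) (Γ (n + 1)) = tripleProduct Γ n :=
  dot3_eq_dotProduct _ _

lemma tripleProduct_mul_succ_pos {Γ : ℤ → Fin 3 → ℝ}
    (h : (∀ n, 0 < tripleProduct Γ n) ∨ (∀ n, tripleProduct Γ n < 0)) (n : ℤ) :
    0 < tripleProduct Γ n * tripleProduct Γ (n + 1) := by
  rcases h with h | h
  · exact mul_pos (h n) (h (n + 1))
  · exact mul_pos_of_neg_of_neg (h n) (h (n + 1))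

namespace ConstantTorsion

variable {lam : ℝ} {Γ γ : ℤ → Fin 3 → ℝ}

lemma cross_ne_zero_of_tripleProduct_ne_zero {n : ℤ} (h : tripleProduct Γ (n + 1) ≠ 0) :
    Γ (n + 1) ⨯₃ Γ n ≠ 0 := by
  intro h0
  apply h
  rw [tripleProduct, add_sub_cancel_right, ← cross_anticomm, h0, neg_zero, zero_dotProduct]

lemma norm3_sub_eq (hγ : ∀ n, γ (n + 1) - γ n = lam • Γ (n + 1) ⨯₃ Γ n) (n : ℤ) :
    norm3 (γ (n + 1) - γ n) = |lam| * norm3 (Γ (n + 1) ⨯₃ Γ n) := by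
  rw [hγ, norm3_smul]

lemma norm3_sub_pos (hlam : lam ≠ 0) (hs : ∀ n, tripleProduct Γ n ≠ 0)
    (hγ : ∀ n, γ (n + 1) - γ n = lam • Γ (n + 1) ⨯₃ Γ n) (n : ℤ) :
    0 < norm3 (γ (n + 1) - γ n) := by
  rw [norm3_sub_eq hγ]
  exact mul_pos (abs_pos.mpr hlam) (norm3_pos (cross_ne_zero_of_tripleProduct_ne_zero (hs _)))

lemma dT_eq (hγ : ∀ n, γ (n + 1) - γ n = lam • Γ (n + 1) ⨯₃ Γ n) (n : ℤ) :
    dT γ n = (lam / norm3 (γ (n + 1) - γ n)) • Γ (n + 1) ⨯₃ Γ n := by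
  rw [dT, hγ, smul_smul, inv_mul_eq_div]

lemma cross_dT_dT_eq (hγ : ∀ n, γ (n + 1) - γ n = lam • Γ (n + 1) ⨯₃ Γ n) (n : ℤ) :
    dT γ (n - 1) ⨯₃ dT γ n =
      (lam ^ 2 / (norm3 (γ n - γ (n - 1)) * norm3 (γ (n + 1) - γ n)) * tripleProduct Γ n) •
        Γ n := by
  simp only [dT_eq hγ, sub_add_cancel, map_smul, LinearMap.smul_apply, cross_cross_cross_eq_smul,
    smul_smul, tripleProduct]
  congr 1
  ring

lemma dB_eq (hlam : lam ≠ 0) (hsph : ∀ n, norm3 (Γ n) = 1 / |lam|)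
    (hs : ∀ n, tripleProduct Γ n ≠ 0) (hγ : ∀ n, γ (n + 1) - γ n = lam • Γ (n + 1) ⨯₃ Γ n)
    (n : ℤ) : dB γ n = (tripleProduct Γ n / |tripleProduct Γ n| * |lam|) • Γ n := by
  have hε₀ := norm3_sub_pos hlam hs hγ (n - 1)
  rw [sub_add_cancel] at hε₀
  have hk : 0 < lam ^ 2 / (norm3 (γ n - γ (n - 1)) * norm3 (γ (n + 1) - γ n)) :=
    div_pos (by positivity) (mul_pos hε₀ (norm3_sub_pos hlam hs hγ n))
  rw [dB, cross3_eq_crossProduct, cross_dT_dT_eq hγ, inv_norm3_smul_smul,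
    mul_div_abs_mul_of_pos hk, hsph, div_div_eq_mul_div, div_one]

lemma not_collinear (hlam : lam ≠ 0) (hs : ∀ n, tripleProduct Γ n ≠ 0)
    (hγ : ∀ n, γ (n + 1) - γ n = lam • Γ (n + 1) ⨯₃ Γ n) (n : ℤ) :
    ¬ Collinear ℝ ({γ (n - 1), γ n, γ (n + 1)} : Set (Fin 3 → ℝ)) := by
  intro hcol
  have hε₀ := norm3_sub_pos hlam hs hγ (n - 1)
  rw [sub_add_cancel] at hε₀
  have hcross : dT γ (n - 1) ⨯₃ dT γ n = 0 := by
    simp only [dT, sub_add_cancel, map_smul, LinearMap.smul_apply,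
      cross_sub_eq_zero_of_collinear hcol, smul_zero]
  rw [cross_dT_dT_eq hγ] at hcross
  refine smul_ne_zero (mul_ne_zero (div_ne_zero (pow_ne_zero 2 hlam) ?_) (hs n)) ?_ hcross
  · exact (mul_pos hε₀ (norm3_sub_pos hlam hs hγ n)).ne'
  · rintro h0
    apply hs n
    rw [tripleProduct, h0, map_zero, zero_dotProduct]

lemma norm3_sub_eq_sin_arccos (hlam : lam ≠ 0) (hsph : ∀ n, norm3 (Γ n) = 1 / |lam|)
    (hγ : ∀ n, γ (n + 1) - γ n = lam • Γ (n + 1) ⨯₃ Γ n) (n : ℤ) :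
    norm3 (γ (n + 1) - γ n) = sin (arccos (lam ^ 2 * dot3 (Γ n) (Γ (n + 1)))) / |lam| := by
  rw [norm3_sub_eq hγ, norm3_cross_eq_mul_sin_arccos, hsph, hsph, dot3_eq_dotProduct,
    dotProduct_comm, one_div_mul_one_div, ← sq, sq_abs, div_div_eq_mul_div, div_one,
    mul_comm _ (lam ^ 2), ← sq_abs]
  field_simp

lemma dot3_dB_dN (hlam : lam ≠ 0) (hsph : ∀ n, norm3 (Γ n) = 1 / |lam|)
    (hs : ∀ n, 0 < tripleProduct Γ n * tripleProduct Γ (n + 1))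
    (hγ : ∀ n, γ (n + 1) - γ n = lam • Γ (n + 1) ⨯₃ Γ n) (n : ℤ) :
    dot3 (dB γ (n + 1)) (dN γ n) = lam * norm3 (γ (n + 1) - γ n) := by
  have hs₀ : ∀ n, tripleProduct Γ n ≠ 0 := fun n => left_ne_zero_of_mul (hs n).ne'
  have hε := norm3_sub_pos hlam hs₀ hγ n
  have hC : (Γ (n + 1) ⨯₃ Γ n ⬝ᵥ Γ (n + 1) ⨯₃ Γ n) * |lam| ^ 2 =
      norm3 (γ (n + 1) - γ n) ^ 2 := by
    rw [norm3_sub_eq hγ, mul_pow, sq_norm3, mul_comm]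
  have hσ := div_abs_mul_div_abs_of_mul_pos (hs n)
  rw [dN, dot3_eq_dotProduct, cross3_eq_crossProduct, dB_eq hlam hsph hs₀ hγ,
    dB_eq hlam hsph hs₀ hγ, dT_eq hγ]
  simp only [map_smul, LinearMap.smul_apply, smul_dotProduct, dotProduct_smul, smul_eq_mul]
  rw [triple_product_permutation (Γ (n + 1)), triple_product_permutation (Γ n)]
  calc _ = lam / norm3 (γ (n + 1) - γ n) *
        (tripleProduct Γ n / |tripleProduct Γ n| *
          (tripleProduct Γ (n + 1) / |tripleProduct Γ (n + 1)|)) *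
        ((Γ (n + 1) ⨯₃ Γ n ⬝ᵥ Γ (n + 1) ⨯₃ Γ n) * |lam| ^ 2) := by ring
    _ = lam * norm3 (γ (n + 1) - γ n) := by rw [hσ, hC]; field_simp

end ConstantTorsion

theorem statement19_general (lam : ℝ) (hlam : lam ≠ 0) (Γ : ℤ → Fin 3 → ℝ)
    (hsph : ∀ n, norm3 (Γ n) = 1 / |lam|)
    (hsign : (∀ n, 0 < dot3 (cross3 (Γ (n - 1)) (Γ n)) (Γ (n + 1))) ∨
             (∀ n, dot3 (cross3 (Γ (n - 1)) (Γ n)) (Γ (n + 1)) < 0))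
    (γ : ℤ → Fin 3 → ℝ)
    (hγ : ∀ n, γ (n + 1) - γ n = lam • cross3 (Γ (n + 1)) (Γ n)) :
    (∀ n, ¬ Collinear ℝ ({γ (n - 1), γ n, γ (n + 1)} : Set (Fin 3 → ℝ))) ∧
    (∀ n, Real.arccos (lam ^ 2 * dot3 (Γ n) (Γ (n + 1))) ∈ Set.Ioo 0 Real.pi ∧
      norm3 (γ (n + 1) - γ n) =
        Real.sin (Real.arccos (lam ^ 2 * dot3 (Γ n) (Γ (n + 1)))) / |lam|) ∧
    (∀ n, dot3 (dB γ (n + 1)) (dN γ n) / norm3 (γ (n + 1) - γ n) = lam) := by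
  simp only [dot3_cross3_eq_tripleProduct] at hsign
  have hs := tripleProduct_mul_succ_pos hsign
  have hs₀ : ∀ n, tripleProduct Γ n ≠ 0 := fun n => left_ne_zero_of_mul (hs n).ne'
  have hε := ConstantTorsion.norm3_sub_pos hlam hs₀ hγ
  have hlength := ConstantTorsion.norm3_sub_eq_sin_arccos hlam hsph hγ
  refine ⟨ConstantTorsion.not_collinear hlam hs₀ hγ, fun n => ⟨?_, hlength n⟩, fun n => ?_⟩
  · have hsin := hε n
    rw [hlength n, div_pos_iff_of_pos_right (abs_pos.mpr hlam)] at hsin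
    exact arccos_mem_Ioo_of_sin_pos hsin
  · rw [ConstantTorsion.dot3_dB_dN hlam hsph hs hγ, mul_div_cancel_right₀ _ (hε n).ne']

/-- (Discrete curves on the sphere and constant-torsion discrete space curves.)
If Γ is a discrete curve on the sphere of radius 1/|λ| with consecutive points linearly
independent and ⟨Γ_{n−1} × Γ_n, Γ_{n+1}⟩ of constant nonzero sign, then the curve γ
defined by γ_{n+1} − γ_n = λ(Γ_{n+1} × Γ_n) is a discrete space curve with
|γ_{n+1} − γ_n| = sin ξ_{n+1}/|λ| (ξ_{n+1} = arccos(λ²⟨Γ_n, Γ_{n+1}⟩) ∈ (0,π) being the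
angle between Γ_n and Γ_{n+1}) and constant torsion λ, i.e. sin ν_{n+1}/ε_n = λ. -/
theorem statement19 (lam : ℝ) (hlam : lam ≠ 0) (Γ : ℤ → Fin 3 → ℝ)
    (hsph : ∀ n, norm3 (Γ n) = 1 / |lam|)
    (hli : ∀ n, LinearIndependent ℝ ![Γ (n - 1), Γ n])
    (hsign : (∀ n, 0 < dot3 (cross3 (Γ (n - 1)) (Γ n)) (Γ (n + 1))) ∨
             (∀ n, dot3 (cross3 (Γ (n - 1)) (Γ n)) (Γ (n + 1)) < 0))
    (γ : ℤ → Fin 3 → ℝ)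
    (hγ : ∀ n, γ (n + 1) - γ n = lam • cross3 (Γ (n + 1)) (Γ n)) :
    (∀ n, ¬ Collinear ℝ ({γ (n - 1), γ n, γ (n + 1)} : Set (Fin 3 → ℝ))) ∧
    (∀ n, Real.arccos (lam ^ 2 * dot3 (Γ n) (Γ (n + 1))) ∈ Set.Ioo 0 Real.pi ∧
      norm3 (γ (n + 1) - γ n) =
        Real.sin (Real.arccos (lam ^ 2 * dot3 (Γ n) (Γ (n + 1)))) / |lam|) ∧
    (∀ n, dot3 (dB γ (n + 1)) (dN γ n) / norm3 (γ (n + 1) - γ n) = lam) :=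
  statement19_general lam hlam Γ hsph hsign γ hγ
end
end
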